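/- arXiv:2502.11987 — 3 statements merged into one kernel-verified Lean document; each statement's English description precedes it below -/
import Mathlib

section
/- If θ ∈ [0, π] satisfies sin((j+1)θ)/sin θ ≥ 0 for all j = 1, 2, ..., n (interpreting the value at θ = 0 as j+1 and at θ = π as (−1)^j (j+1)), then θ ∈ [0, π/(n+1)]. -/
open Real

/-- `X_j(θ) = sin((j+1)θ)/sin θ` for `θ ∈ (0, π)`, extended by continuity with
`X_j(0) = j+1` and `X_j(π) = (-1)^j (j+1)`. -/
noncomputable def chebX (j : ℕ) (θ : ℝ) : ℝ :=
  if θ = 0 then (j + 1 : ℝ)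
  else if θ = π then (-1) ^ j * (j + 1 : ℝ)
  else Real.sin ((j + 1) * θ) / Real.sin θ

/-- If `θ ∈ [0, π]` satisfies `X_j(θ) ≥ 0` for all `j = 1, …, n`, then
`θ ∈ [0, π/(n+1)]`. -/
theorem stmt3 (n : ℕ) (hn : 1 ≤ n) (θ : ℝ) (hθ : θ ∈ Set.Icc 0 π)
    (h : ∀ j : ℕ, 1 ≤ j → j ≤ n → 0 ≤ chebX j θ) :
    θ ∈ Set.Icc 0 (π / (n + 1)) := by
  obtain ⟨h0, hπ⟩ := hθ
  refine ⟨h0, ?_⟩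
  by_contra hc
  push_neg at hc
  have hn1 : (0:ℝ) < (n:ℝ) + 1 := by positivity
  have hθpos : 0 < θ := lt_trans (by positivity) hc
  rcases eq_or_lt_of_le hπ with hp | hp
  · have h1 := h 1 le_rfl hn
    rw [hp] at h1
    simp [chebX, Real.pi_ne_zero] at h1
    linarith
  · have hθne0 : θ ≠ 0 := ne_of_gt hθpos
    have hθneπ : θ ≠ π := ne_of_lt hp
    have hmul : π < ((n:ℝ)+1) * θ := by
      have := (div_lt_iff₀ hn1).mp hc
      linarith
    have hex : ∃ j : ℕ, π < ((j:ℝ)+1) * θ := ⟨n, hmul⟩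
    classical
    set j := Nat.find hex with hj
    have hjspec : π < ((j:ℝ)+1) * θ := Nat.find_spec hex
    have hjle : j ≤ n := Nat.find_le hmul
    have hj1 : 1 ≤ j := by
      rcases Nat.eq_zero_or_pos j with hj0 | hj0
      · rw [hj0] at hjspec; simp at hjspec; linarith
      · exact hj0
    have hmin : ((j:ℝ) - 1 + 1) * θ ≤ π := by
      have hlt : j - 1 < j := Nat.sub_lt (by omega) one_pos
      have := Nat.find_min hex hlt
      push_neg at this
      have hcast : ((j - 1 : ℕ) : ℝ) = (j:ℝ) - 1 := by
        push_cast [Nat.cast_sub hj1]; ring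
      rwa [hcast] at this
    have hle2 : ((j:ℝ)+1)*θ < 2*π := by nlinarith
    have hsinneg : Real.sin (((j:ℝ)+1)*θ) < 0 := by
      have hpos : 0 < Real.sin (((j:ℝ)+1)*θ - π) :=
        Real.sin_pos_of_pos_of_lt_pi (by linarith) (by linarith)
      rw [Real.sin_sub_pi] at hpos
      linarith
    have hsinθ : 0 < Real.sin θ := Real.sin_pos_of_pos_of_lt_pi hθpos hp
    have hh := h j hj1 hjle
    rw [chebX, if_neg hθne0, if_neg hθneπ] at hh
    have : Real.sin (((j:ℝ) + 1) * θ) / Real.sin θ < 0 :=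
      div_neg_of_neg_of_pos hsinneg hsinθ
    push_cast at hh
    linarith
end

section
/- For the p-adic Plancherel measure μ_p on [0, π] and the Chebyshev functions X_m(θ) = sin((m+1)θ)/sin θ, one has ∫_0^π X_m(θ) dμ_p(θ) = p^{−m/2} if m is even and 0 if m is odd. -/
/-!
With `q = p⁻¹` the density is `(2/π)(1+q) sin²θ / D(θ)`, where `D(θ) = 1 + q² - 2q cos 2θ`,
and `2 sin θ sin (m+1)θ = cos mθ - cos (m+2)θ`, so the moment is
`(1+q)/π · (I m - I (m+2))` with `I n = ∫₀^π cos nθ / D(θ) dθ`.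
The reflection `θ ↦ π - θ` fixes `D` and negates `cos nθ` for odd `n`, so `I n = 0` then.
For even `n` the identity `2q cos 2θ = 1 + q² - D` gives the recurrence
`q (I (n+2) + I (n-2)) = (1 + q²) I n - ∫₀^π cos nθ`, whose last term vanishes for `n ≠ 0`;
together with `I 0 = π / (1 - q²)` (an explicit arctan antiderivative) this yields
`I (2k) = π qᵏ / (1 - q²)`.
-/

open Real intervalIntegral

/-- `|1 - q e^{2iθ}|²`: the denominator of the Poisson kernel at radius `q` and angle `2θ`. -/
noncomputable def poissonDenom (q θ : ℝ) : ℝ := 1 + q ^ 2 - 2 * q * cos (2 * θ)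

noncomputable def cosMoment (q c : ℝ) : ℝ :=
  ∫ θ in (0:ℝ)..π, cos (c * θ) / poissonDenom q θ

section

variable {q : ℝ}

lemma abs_mul_cos_lt_one (hq : |q| < 1) (x : ℝ) : |q * cos x| < 1 := by
  rw [abs_mul]
  nlinarith [abs_cos_le_one x, abs_nonneg q, abs_nonneg (cos x)]

lemma poissonDenom_pos (hq : |q| < 1) (θ : ℝ) : 0 < poissonDenom q θ := by
  have h := (abs_lt.mp (abs_mul_cos_lt_one hq (2 * θ))).2
  have hsc := sin_sq_add_cos_sq (2 * θ)
  unfold poissonDenom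
  nlinarith [sq_nonneg (q * sin (2 * θ))]

lemma poissonDenom_eq_sin_sq (q θ : ℝ) :
    poissonDenom q θ = (1 - q) ^ 2 + 4 * q * sin θ ^ 2 := by
  rw [poissonDenom, cos_two_mul, cos_sq']
  ring

lemma poissonDenom_pi_sub (q θ : ℝ) : poissonDenom q (π - θ) = poissonDenom q θ := by
  simp only [poissonDenom_eq_sin_sq, sin_pi_sub]

lemma intervalIntegrable_cos_div_poissonDenom (hq : |q| < 1) (c : ℝ) :
    IntervalIntegrable (fun θ => cos (c * θ) / poissonDenom q θ) MeasureTheory.volume 0 π :=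
  (Continuous.div (by fun_prop) (by unfold poissonDenom; fun_prop)
    fun θ => (poissonDenom_pos hq θ).ne').intervalIntegrable _ _

lemma hasDerivAt_poissonDenom_antideriv (hq : |q| < 1) (θ : ℝ) :
    HasDerivAt (fun x => (x + arctan (q * sin (2 * x) / (1 - q * cos (2 * x)))) / (1 - q ^ 2))
      (1 / poissonDenom q θ) θ := by
  have hq' : q ^ 2 < 1 := by nlinarith [sq_abs q, abs_nonneg q]
  have hv : 0 < 1 - q * cos (2 * θ) := by
    linarith [(abs_lt.mp (abs_mul_cos_lt_one hq (2 * θ))).2]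
  have h2 : HasDerivAt (fun x : ℝ => 2 * x) 2 θ := by
    simpa using (hasDerivAt_id θ).const_mul 2
  have hu := ((hasDerivAt_sin (2 * θ)).comp θ h2).const_mul q
  have hw := (((hasDerivAt_cos (2 * θ)).comp θ h2).const_mul q).const_sub 1
  have harc := (hasDerivAt_arctan _).comp θ (hu.div hw hv.ne')
  refine (((hasDerivAt_id θ).add harc).div_const (1 - q ^ 2)).congr_deriv ?_
  have hD := poissonDenom_pos hq θ
  have hq2 : (1:ℝ) - q ^ 2 ≠ 0 := by linarith
  simp only [Function.comp_apply, Pi.div_apply]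
  unfold poissonDenom at hD ⊢
  field_simp
  rw [eq_div_iff (by linarith)]
  linear_combination (2 * q ^ 3 * cos (2 * θ) - 2 * q ^ 2) * sin_sq_add_cos_sq (2 * θ)

lemma integral_one_div_poissonDenom (hq : |q| < 1) :
    ∫ θ in (0:ℝ)..π, 1 / poissonDenom q θ = π / (1 - q ^ 2) := by
  rw [integral_eq_sub_of_hasDerivAt (fun x _ => hasDerivAt_poissonDenom_antideriv hq x)
    (by simpa using intervalIntegrable_cos_div_poissonDenom hq 0)]
  simp

lemma integral_cos_nat_mul_eq_zero {n : ℕ} (hn : n ≠ 0) :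
    ∫ θ in (0:ℝ)..π, cos (n * θ) = 0 := by
  rw [integral_comp_mul_left (fun x => cos x) (Nat.cast_ne_zero.mpr hn), integral_cos,
    sin_nat_mul_pi]
  simp

lemma cosMoment_zero (hq : |q| < 1) : cosMoment q 0 = π / (1 - q ^ 2) := by
  simpa [cosMoment] using integral_one_div_poissonDenom hq

lemma cosMoment_neg (q c : ℝ) : cosMoment q (-c) = cosMoment q c := by
  simp only [cosMoment, neg_mul, cos_neg]

lemma cosMoment_of_odd {n : ℕ} (hn : Odd n) : cosMoment q n = 0 := by
  have hflip :=
    integral_comp_sub_left (fun θ => cos (n * θ) / poissonDenom q θ) π (a := 0) (b := π)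
  have hodd : ∀ θ : ℝ, cos (n * (π - θ)) = -cos (n * θ) := fun θ => by
    rw [mul_sub, cos_nat_mul_pi_sub, hn.neg_one_pow, neg_one_mul]
  simp only [sub_self, sub_zero, poissonDenom_pi_sub, hodd, neg_div, integral_neg] at hflip
  rw [cosMoment]
  linarith

lemma cosMoment_add_two_add_cosMoment_sub_two (hq : |q| < 1) (c : ℝ) :
    q * (cosMoment q (c + 2) + cosMoment q (c - 2)) =
      (1 + q ^ 2) * cosMoment q c - ∫ θ in (0:ℝ)..π, cos (c * θ) := by
  have hpt : ∀ θ ∈ Set.uIcc (0:ℝ) π,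
      q * (cos ((c + 2) * θ) / poissonDenom q θ) + q * (cos ((c - 2) * θ) / poissonDenom q θ) =
        (1 + q ^ 2) * (cos (c * θ) / poissonDenom q θ) - cos (c * θ) := by
    intro θ _
    have hD := (poissonDenom_pos hq θ).ne'
    have hcc := cos_add_cos ((c + 2) * θ) ((c - 2) * θ)
    rw [show ((c + 2) * θ + (c - 2) * θ) / 2 = c * θ by ring,
      show ((c + 2) * θ - (c - 2) * θ) / 2 = 2 * θ by ring] at hcc
    calc q * (cos ((c + 2) * θ) / poissonDenom q θ) + q * (cos ((c - 2) * θ) / poissonDenom q θ)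
        = q * (cos ((c + 2) * θ) + cos ((c - 2) * θ)) / poissonDenom q θ := by ring
      _ = (1 + q ^ 2 - poissonDenom q θ) * cos (c * θ) / poissonDenom q θ := by
        rw [hcc]; unfold poissonDenom; ring
      _ = (1 + q ^ 2) * (cos (c * θ) / poissonDenom q θ) - cos (c * θ) := by field_simp
  have hI := intervalIntegrable_cos_div_poissonDenom hq
  rw [cosMoment, cosMoment, cosMoment, mul_add, ← integral_const_mul, ← integral_const_mul,
    ← integral_add ((hI _).const_mul q) ((hI _).const_mul q), integral_congr hpt,
    integral_sub ((hI _).const_mul _) (Continuous.intervalIntegrable (by fun_prop) _ _),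
    integral_const_mul]

lemma cosMoment_two_mul (hq : |q| < 1) (hq0 : q ≠ 0) (k : ℕ) :
    cosMoment q (2 * k) = π * q ^ k / (1 - q ^ 2) := by
  have hq2 : 1 - q ^ 2 ≠ 0 := by nlinarith [sq_abs q, abs_nonneg q]
  induction k using Nat.twoStepInduction with
  | zero => simpa using cosMoment_zero hq
  | one =>
    have h := cosMoment_add_two_add_cosMoment_sub_two hq 0
    rw [zero_sub, cosMoment_neg, cosMoment_zero hq] at h
    simp only [zero_add, zero_mul, cos_zero, integral_const, smul_eq_mul, sub_zero, mul_one]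
      at h
    rw [Nat.cast_one, mul_one, eq_div_iff hq2]
    apply mul_left_cancel₀ hq0
    field_simp at h
    linear_combination h / 2
  | more k ih0 ih1 =>
    have h := cosMoment_add_two_add_cosMoment_sub_two hq (2 * (k + 1 : ℕ))
    rw [show (2 * ((k + 1 : ℕ) : ℝ)) + 2 = 2 * (k + 2 : ℕ) by push_cast; ring,
      show (2 * ((k + 1 : ℕ) : ℝ)) - 2 = 2 * k by push_cast; ring, ih0, ih1,
      show (2 * ((k + 1 : ℕ) : ℝ)) = ((2 * (k + 1) : ℕ) : ℝ) by push_cast; ring,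
      integral_cos_nat_mul_eq_zero (by omega)] at h
    rw [eq_div_iff hq2]
    apply mul_left_cancel₀ hq0
    field_simp at h
    linear_combination h

lemma sin_div_sin_mul_density_eq (q c θ : ℝ) :
    sin ((c + 1) * θ) / sin θ *
        ((2 / π) * (1 + q) * sin θ ^ 2 / ((1 - q) ^ 2 + 4 * q * sin θ ^ 2)) =
      (1 + q) / π * (cos (c * θ) / poissonDenom q θ - cos ((c + 2) * θ) / poissonDenom q θ) := by
  have hs : sin ((c + 1) * θ) / sin θ * sin θ ^ 2 = sin ((c + 1) * θ) * sin θ := by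
    rcases eq_or_ne (sin θ) 0 with h | h
    · simp [h]
    · field_simp
  have hprod := two_mul_sin_mul_sin ((c + 1) * θ) θ
  rw [show (c + 1) * θ - θ = c * θ by ring, show (c + 1) * θ + θ = (c + 2) * θ by ring] at hprod
  rw [← poissonDenom_eq_sin_sq]
  calc _ = (1 + q) / π * (2 * (sin ((c + 1) * θ) / sin θ * sin θ ^ 2)) / poissonDenom q θ := by
          ring
    _ = _ := by rw [hs]; linear_combination (1 + q) / π / poissonDenom q θ * hprod

lemma integral_sin_div_sin_mul_density (hq : |q| < 1) (c : ℝ) :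
    ∫ θ in (0:ℝ)..π, sin ((c + 1) * θ) / sin θ *
        ((2 / π) * (1 + q) * sin θ ^ 2 / ((1 - q) ^ 2 + 4 * q * sin θ ^ 2))
      = (1 + q) / π * (cosMoment q c - cosMoment q (c + 2)) := by
  simp only [sin_div_sin_mul_density_eq]
  rw [integral_const_mul, integral_sub (intervalIntegrable_cos_div_poissonDenom hq _)
    (intervalIntegrable_cos_div_poissonDenom hq _), cosMoment, cosMoment]

end

/-- The `m`-th moment of the `p`-adic Plancherel measure against the Chebyshev
function `X_m(θ) = sin((m+1)θ)/sin θ` equals `p^{-m/2}` for even `m` and `0` for odd `m`. -/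
theorem stmt7 (p : ℝ) (hp : 1 < p) (m : ℕ) :
    ∫ θ in (0:ℝ)..π,
      (Real.sin ((m + 1) * θ) / Real.sin θ) *
        ((2 / π) * (1 + p⁻¹) * Real.sin θ ^ 2 /
          ((1 - p⁻¹) ^ 2 + 4 * p⁻¹ * Real.sin θ ^ 2)) =
      if Even m then p ^ (-(m : ℝ) / 2) else 0 := by
  have hp0 : 0 < p := one_pos.trans hp
  set q := p⁻¹
  have hq0 : 0 < q := inv_pos.mpr hp0
  have hq1 : q < 1 := inv_lt_one_of_one_lt₀ hp
  have hq : |q| < 1 := by rwa [abs_of_pos hq0]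
  have hq2 : 1 - q ^ 2 ≠ 0 := by nlinarith
  rw [integral_sin_div_sin_mul_density hq]
  split_ifs with hm
  · obtain ⟨k, rfl⟩ := hm
    rw [show ((k + k : ℕ) : ℝ) = 2 * k by push_cast; ring,
      show 2 * (k : ℝ) + 2 = 2 * (k + 1 : ℕ) by push_cast; ring,
      cosMoment_two_mul hq hq0.ne', cosMoment_two_mul hq hq0.ne',
      show -(2 * (k : ℝ)) / 2 = -(k : ℝ) by ring, rpow_neg hp0.le, rpow_natCast, ← inv_pow]
    field_simp
    ring
  · have hodd := Nat.not_even_iff_odd.mp hm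
    rw [cosMoment_of_odd hodd, show (m : ℝ) + 2 = (m + 2 : ℕ) by push_cast; ring,
      cosMoment_of_odd (hodd.add_even even_two)]
    ring
end

section
/- For real x with |x| ≤ k^α/n where n = e^{k/(k−3)}, k ≥ 4, and 1/2 < α ≤ 1, the squared Bessel tail sum 𝒥_{k−1}(x) = ∑_{l ≥ 0} (x^{k−1+2l}/(l!·Γ(k+l)))² satisfies 𝒥_{k−1}(x) ≪ x⁴ · k^{2(k(α−1) − 2α + k^{2α−1}/2)}, with an absolute implied constant. -/
open Real

lemma aux_fact_mul_pow_le (m : ℕ) : ∀ l : ℕ, m.factorial * (m + 1) ^ l ≤ (m + l).factorial := by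
  intro l
  induction l with
  | zero => simp
  | succ l ih =>
      have h : (m + (l + 1)).factorial = (m + l + 1) * (m + l).factorial := by
        rw [← Nat.add_assoc]; exact Nat.factorial_succ _
      rw [h, pow_succ]
      calc m.factorial * ((m + 1) ^ l * (m + 1))
          = (m + 1) * (m.factorial * (m + 1) ^ l) := by ring
        _ ≤ (m + l + 1) * (m + l).factorial :=
            Nat.mul_le_mul (by omega) ih

lemma aux_central (l : ℕ) : (2 * l).factorial ≤ 4 ^ l * l.factorial ^ 2 := by
  induction l with
  | zero => simp
  | succ l ih =>
      have h1 : 2 * (l + 1) = (2 * l + 1) + 1 := by ring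
      rw [h1, Nat.factorial_succ, Nat.factorial_succ]
      calc (2 * l + 1 + 1) * ((2 * l + 1) * (2 * l).factorial)
          ≤ (2 * (l + 1)) * ((2 * (l + 1)) * (4 ^ l * l.factorial ^ 2)) :=
            Nat.mul_le_mul (by omega) (Nat.mul_le_mul (by omega) ih)
        _ = 4 ^ (l + 1) * ((l + 1) * l.factorial) ^ 2 := by ring
        _ = 4 ^ (l + 1) * ((l + 1).factorial) ^ 2 := by rw [Nat.factorial_succ]

lemma aux_self_pow : ∀ n : ℕ, 1 ≤ n →
    (n : ℝ) ^ n * Real.exp 1 ≤ n.factorial * Real.exp n := by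
  intro n hn
  induction n, hn using Nat.le_induction with
  | base => simp
  | succ n hn ih =>
      have hn0 : (0 : ℝ) < n := by exact_mod_cast hn
      have key : ((n : ℝ) + 1) ^ n ≤ (n : ℝ) ^ n * Real.exp 1 := by
        have h1 : (n : ℝ) + 1 ≤ n * Real.exp (1 / n) := by
          have h2 := Real.add_one_le_exp (1 / (n : ℝ))
          have h3 := mul_le_mul_of_nonneg_left h2 hn0.le
          have h4 : (n : ℝ) * (1 / n + 1) = n + 1 := by field_simp; ring
          linarith
        calc ((n : ℝ) + 1) ^ n ≤ ((n : ℝ) * Real.exp (1 / n)) ^ n := by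
              apply pow_le_pow_left₀ (by positivity) h1
          _ = (n : ℝ) ^ n * Real.exp (1 / n) ^ n := by rw [mul_pow]
          _ = (n : ℝ) ^ n * Real.exp 1 := by
              rw [← Real.exp_nat_mul]
              congr 1
              field_simp
      have hfac : (0 : ℝ) < n.factorial := by positivity
      have hpush : (((n + 1 : ℕ)) : ℝ) = (n : ℝ) + 1 := by push_cast; ring
      rw [hpush]
      have hfac2 : (((n + 1 : ℕ).factorial : ℝ)) = ((n : ℝ) + 1) * n.factorial := by
        rw [Nat.factorial_succ]; push_cast; ring
      rw [hfac2]
      have hexp : Real.exp ((n : ℝ) + 1) = Real.exp n * Real.exp 1 := by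
        rw [← Real.exp_add]
      rw [hexp]
      have e1 : (0 : ℝ) < Real.exp 1 := Real.exp_pos 1
      calc ((n : ℝ) + 1) ^ (n + 1) * Real.exp 1
          = ((n : ℝ) + 1) * (((n : ℝ) + 1) ^ n * Real.exp 1) := by ring
        _ ≤ ((n : ℝ) + 1) * ((n : ℝ) ^ n * Real.exp 1 * Real.exp 1) := by
            have := mul_le_mul_of_nonneg_right key e1.le
            nlinarith
        _ ≤ ((n : ℝ) + 1) * (n.factorial * Real.exp n * Real.exp 1) := by
            have := mul_le_mul_of_nonneg_right ih e1.le
            nlinarith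
        _ = ((n : ℝ) + 1) * n.factorial * (Real.exp n * Real.exp 1) := by ring

lemma exp_eq_tsum_real (y : ℝ) : Real.exp y = ∑' n : ℕ, y ^ n / n.factorial := by
  rw [Real.exp_eq_exp_ℝ, NormedSpace.exp_eq_tsum_div]

lemma even_part_le_exp (y : ℝ) (hy : 0 ≤ y) :
    ∑' l : ℕ, y ^ (2 * l) / ((2 * l).factorial : ℝ) ≤ Real.exp y := by
  have hsum : Summable (fun n : ℕ => y ^ n / n.factorial : ℕ → ℝ) :=
    Real.summable_pow_div_factorial y
  have hinj : Function.Injective (fun l : ℕ => 2 * l) := fun a b h => by simpa using h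
  have hsub : Summable (fun l : ℕ => y ^ (2 * l) / ((2 * l).factorial : ℝ)) :=
    hsum.comp_injective hinj
  rw [exp_eq_tsum_real]
  exact Summable.tsum_le_tsum_of_inj (fun l => 2 * l) hinj
    (fun c _ => by positivity) (fun l => le_rfl) hsub hsum

lemma inj2 : Function.Injective (fun l : ℕ => 2 * l) := fun a b h => by simpa using h

set_option maxHeartbeats 1000000 in
/-- For `k ≥ 4`, `1/2 < α ≤ 1` and real `x` with `|x| ≤ k^α / n` where
`n = e^{k/(k−3)}`, the squared Bessel tail sum
`𝒥_{k−1}(x) = ∑_{l ≥ 0} (x^{k−1+2l}/(l!·Γ(k+l)))²` satisfies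
`𝒥_{k−1}(x) ≪ x⁴ · k^{2(k(α−1) − 2α + k^{2α−1}/2)}` with an absolute implied constant. -/
theorem stmt15 :
    ∃ C : ℝ, 0 < C ∧ ∀ (k : ℕ), 4 ≤ k → ∀ α : ℝ, 1 / 2 < α → α ≤ 1 →
      ∀ x : ℝ, |x| ≤ (k : ℝ) ^ α / Real.exp ((k : ℝ) / ((k : ℝ) - 3)) →
        ∑' l : ℕ, (x ^ (k - 1 + 2 * l) / ((l.factorial : ℝ) * Real.Gamma ((k : ℝ) + l))) ^ 2 ≤
          C * x ^ 4 *
            (k : ℝ) ^ (2 * ((k : ℝ) * (α - 1) - 2 * α + (k : ℝ) ^ (2 * α - 1) / 2)) := by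
  refine ⟨896, by norm_num, ?_⟩
  intro k hk α hα1 hα2 x hx
  set K : ℝ := (k : ℝ) with hKdef
  have hK4 : (4 : ℝ) ≤ K := by rw [hKdef]; exact_mod_cast hk
  have hK0 : (0 : ℝ) < K := by linarith
  have hK1 : (1 : ℝ) ≤ K := by linarith
  have hK3 : (0 : ℝ) < K - 3 := by linarith
  set c : ℝ := K / (K - 3) with hcdef
  have hc0 : 0 < c := by positivity
  set M : ℝ := K ^ α * Real.exp (-c) with hMdef
  have hM0 : 0 ≤ M := by positivity
  have hxM : |x| ≤ M := by
    have hMe : K ^ α / Real.exp c = M := by rw [hMdef, Real.exp_neg, div_eq_mul_inv]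
    rw [← hMe]; exact hx
  set t : ℝ := K ^ (2 * α - 1) with htdef
  have ht1 : 1 ≤ t := by
    rw [htdef]
    calc (1 : ℝ) = K ^ (0 : ℝ) := (Real.rpow_zero K).symm
      _ ≤ K ^ (2 * α - 1) := Real.rpow_le_rpow_of_exponent_le hK1 (by linarith)
  have ht0 : 0 < t := by linarith
  have htK : t ≤ K := by
    rw [htdef]
    calc K ^ (2 * α - 1) ≤ K ^ (1 : ℝ) := Real.rpow_le_rpow_of_exponent_le hK1 (by linarith)
      _ = K := Real.rpow_one K
  set P : ℝ := 2 * α * K - 6 * α - 2 * K + 2 with hPdef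
  set Q : ℝ := 2 * (K * (α - 1) - 2 * α + t / 2) with hQdef
  -- cast facts
  have hA : ((k - 1 : ℕ) : ℝ) = K - 1 := by
    have h : k - 1 + 1 = k := by omega
    have h2 := congrArg (fun n : ℕ => (n : ℝ)) h
    push_cast at h2
    rw [← hKdef] at h2
    linarith
  have hA3 : ((k - 3 : ℕ) : ℝ) = K - 3 := by
    have h : k - 3 + 3 = k := by omega
    have h2 := congrArg (fun n : ℕ => (n : ℝ)) h
    push_cast at h2
    rw [← hKdef] at h2
    linarith
  have hcK : c * (K - 3) = K := div_mul_cancel₀ K hK3.ne'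
  have hsqK : ∀ y : ℝ, (K ^ y) ^ (2 : ℕ) = K ^ (2 * y) := by
    intro y
    rw [← Real.rpow_natCast (K ^ y) 2, ← Real.rpow_mul hK0.le]
    congr 1; push_cast; ring
  have hsqE : ∀ z : ℝ, (Real.exp z) ^ (2 : ℕ) = Real.exp (2 * z) := by
    intro z
    rw [← Real.exp_nat_mul]
    norm_num
  -- factorial lower bound for (k-1)!
  have hAineq : K ≤ (K - 1) * Real.exp (1 / (K - 1)) := by
    have h2 := Real.add_one_le_exp (1 / (K - 1))
    have h3 := mul_le_mul_of_nonneg_left h2 (by linarith : (0 : ℝ) ≤ K - 1)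
    have hne : K - 1 ≠ 0 := by linarith
    have h4 : (K - 1) * (1 / (K - 1) + 1) = K := by
      rw [mul_add, mul_one_div, div_self hne]; ring
    linarith
  have hKpow : K ^ (k - 1) ≤ ((k - 1 : ℕ) : ℝ) ^ (k - 1) * Real.exp 1 := by
    calc K ^ (k - 1) ≤ ((K - 1) * Real.exp (1 / (K - 1))) ^ (k - 1) :=
          pow_le_pow_left₀ hK0.le hAineq _
      _ = (K - 1) ^ (k - 1) * Real.exp (1 / (K - 1)) ^ (k - 1) := mul_pow _ _ _
      _ = (K - 1) ^ (k - 1) * Real.exp (((k - 1 : ℕ) : ℝ) * (1 / (K - 1))) := by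
          rw [Real.exp_nat_mul]
      _ = ((k - 1 : ℕ) : ℝ) ^ (k - 1) * Real.exp 1 := by
          rw [hA]; congr 1
          rw [mul_one_div, div_self (by linarith : K - 1 ≠ 0)]
  have hfack : K ^ (k - 1) * Real.exp (1 - K) ≤ ((k - 1).factorial : ℝ) := by
    have hL3 := aux_self_pow (k - 1) (by omega)
    rw [hA] at hL3
    have e0 : (0 : ℝ) ≤ Real.exp (1 - K) := (Real.exp_pos _).le
    calc K ^ (k - 1) * Real.exp (1 - K)
        ≤ ((K - 1) ^ (k - 1) * Real.exp 1) * Real.exp (1 - K) := by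
          have := mul_le_mul_of_nonneg_right hKpow e0
          rw [hA] at this
          linarith
      _ ≤ (((k - 1).factorial : ℝ) * Real.exp (K - 1)) * Real.exp (1 - K) := by
          exact mul_le_mul_of_nonneg_right hL3 e0
      _ = ((k - 1).factorial : ℝ) := by
          rw [mul_assoc, ← Real.exp_add]
          norm_num
  -- termwise bound
  have key : ∀ l : ℕ,
      (x ^ (k - 1 + 2 * l) / ((l.factorial : ℝ) * Real.Gamma (K + l))) ^ 2 ≤
      |x| ^ 4 * (Real.exp (-2) * K ^ P) * ((2 * t) ^ (2 * l) / ((2 * l).factorial : ℝ)) := by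
    intro l
    have hl0 : (0 : ℝ) ≤ (l : ℝ) := Nat.cast_nonneg l
    have hGamma : Real.Gamma (K + l) = ((k + l - 1).factorial : ℝ) := by
      have hkl : ((k + l - 1 : ℕ) : ℝ) = K + l - 1 := by
        have h : k + l - 1 + 1 = k + l := by omega
        have h2 := congrArg (fun n : ℕ => (n : ℝ)) h
        push_cast at h2
        rw [← hKdef] at h2
        linarith
      rw [show K + (l : ℝ) = ((k + l - 1 : ℕ) : ℝ) + 1 from by rw [hkl]; ring]
      exact Real.Gamma_nat_eq_factorial _
    set n2 : ℕ := 2 * (k - 3) + 4 * l with hn2def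
    have hn2 : ((n2 : ℕ) : ℝ) = 2 * (K - 3) + 4 * l := by
      rw [hn2def]; push_cast; rw [hA3]
    -- rewrite the term
    have hxpow : (x ^ (k - 1 + 2 * l)) ^ 2 = |x| ^ 4 * |x| ^ n2 := by
      rw [← sq_abs (x ^ (k - 1 + 2 * l)), abs_pow, ← pow_mul,
        show (k - 1 + 2 * l) * 2 = 4 + n2 from by rw [hn2def]; omega, pow_add]
    have hfl : (x ^ (k - 1 + 2 * l) / ((l.factorial : ℝ) * Real.Gamma (K + l))) ^ 2 =
        |x| ^ 4 * |x| ^ n2 / ((l.factorial : ℝ) * ((k + l - 1).factorial : ℝ)) ^ 2 := by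
      rw [hGamma, div_pow, hxpow]
    -- numerator bound
    have hnum : |x| ^ 4 * |x| ^ n2 ≤
        |x| ^ 4 * (K ^ (α * (2 * (K - 3) + 4 * (l : ℝ))) * Real.exp (-(2 * K))) := by
      have h1 : |x| ^ n2 ≤ M ^ n2 := pow_le_pow_left₀ (abs_nonneg x) hxM n2
      have hMpow : M ^ n2 = K ^ (α * (2 * (K - 3) + 4 * (l : ℝ))) *
          Real.exp (((n2 : ℕ) : ℝ) * -c) := by
        rw [hMdef, mul_pow, ← Real.rpow_natCast (K ^ α) n2, ← Real.rpow_mul hK0.le,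
          ← Real.exp_nat_mul, hn2]
      have hexp_le : Real.exp (((n2 : ℕ) : ℝ) * -c) ≤ Real.exp (-(2 * K)) := by
        apply Real.exp_le_exp.mpr
        rw [hn2]
        have heq : (2 * (K - 3) + 4 * (l : ℝ)) * -c = -(2 * K) - 4 * ((l : ℝ) * c) := by
          linear_combination (-2 : ℝ) * hcK
        rw [heq]
        have hlc := mul_nonneg hl0 hc0.le
        linarith
      have h2 : M ^ n2 ≤ K ^ (α * (2 * (K - 3) + 4 * (l : ℝ))) * Real.exp (-(2 * K)) := by
        rw [hMpow]
        exact mul_le_mul_of_nonneg_left hexp_le (Real.rpow_pos_of_pos hK0 _).le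
      have := h1.trans h2
      exact mul_le_mul_of_nonneg_left this (by positivity)
    -- denominator bound
    have hfac1 : ((k - 1).factorial : ℝ) * K ^ l ≤ ((k + l - 1).factorial : ℝ) := by
      have h := aux_fact_mul_pow_le (k - 1) l
      have e1 : k - 1 + 1 = k := by omega
      have e2 : k - 1 + l = k + l - 1 := by omega
      rw [e1, e2] at h
      rw [hKdef]
      exact_mod_cast h
    have hfac2 : K ^ (k - 1 + l) * Real.exp (1 - K) ≤ ((k + l - 1).factorial : ℝ) := by
      calc K ^ (k - 1 + l) * Real.exp (1 - K)
          = (K ^ (k - 1) * Real.exp (1 - K)) * K ^ l := by rw [pow_add]; ring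
        _ ≤ ((k - 1).factorial : ℝ) * K ^ l :=
            mul_le_mul_of_nonneg_right hfack (by positivity)
        _ ≤ _ := hfac1
    have hrpow1 : (K : ℝ) ^ (k - 1 + l) = K ^ (K - 1 + (l : ℝ)) := by
      rw [← Real.rpow_natCast K (k - 1 + l)]
      congr 1
      push_cast
      rw [hA]
    have hD : (l.factorial : ℝ) ^ 2 * (K ^ (2 * (K - 1 + (l : ℝ))) * Real.exp (2 * (1 - K))) ≤
        ((l.factorial : ℝ) * ((k + l - 1).factorial : ℝ)) ^ 2 := by
      rw [mul_pow]
      apply mul_le_mul_of_nonneg_left ?_ (by positivity)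
      have h1 : K ^ (2 * (K - 1 + (l : ℝ))) * Real.exp (2 * (1 - K)) =
          (K ^ (K - 1 + (l : ℝ)) * Real.exp (1 - K)) ^ (2 : ℕ) := by
        rw [mul_pow, hsqK, hsqE]
      rw [h1]
      apply pow_le_pow_left₀ (by positivity) ?_ 2
      rw [← hrpow1]
      exact hfac2
    -- combine
    have hmid : (x ^ (k - 1 + 2 * l) / ((l.factorial : ℝ) * Real.Gamma (K + l))) ^ 2 ≤
        |x| ^ 4 * (K ^ (α * (2 * (K - 3) + 4 * (l : ℝ))) * Real.exp (-(2 * K))) /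
          ((l.factorial : ℝ) ^ 2 * (K ^ (2 * (K - 1 + (l : ℝ))) * Real.exp (2 * (1 - K)))) := by
      rw [hfl]
      apply div_le_div₀ (by positivity) hnum (by positivity) hD
    -- algebraic identity
    have hfl0 : ((l.factorial : ℝ)) ≠ 0 := by positivity
    have hR : (K ^ (α * (2 * (K - 3) + 4 * (l : ℝ))) * Real.exp (-(2 * K))) /
        ((l.factorial : ℝ) ^ 2 * (K ^ (2 * (K - 1 + (l : ℝ))) * Real.exp (2 * (1 - K)))) =
        Real.exp (-2) * K ^ P * (K ^ ((2 * α - 1) * (2 * (l : ℝ))) / (l.factorial : ℝ) ^ 2) := by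
      have e1 : K ^ (α * (2 * (K - 3) + 4 * (l : ℝ))) =
          K ^ P * K ^ ((2 * α - 1) * (2 * (l : ℝ))) * K ^ (2 * (K - 1 + (l : ℝ))) := by
        rw [← Real.rpow_add hK0, ← Real.rpow_add hK0]
        congr 1
        rw [hPdef]; ring
      have e2 : Real.exp (-(2 * K)) = Real.exp (-2) * Real.exp (2 * (1 - K)) := by
        rw [← Real.exp_add]; congr 1; ring
      have hne1 : K ^ (2 * (K - 1 + (l : ℝ))) ≠ 0 := (Real.rpow_pos_of_pos hK0 _).ne'
      have hne2 : Real.exp (2 * (1 - K)) ≠ 0 := (Real.exp_pos _).ne'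
      rw [e1, e2]
      field_simp
    have hstep : K ^ ((2 * α - 1) * (2 * (l : ℝ))) / (l.factorial : ℝ) ^ 2 ≤
        (2 * t) ^ (2 * l) / ((2 * l).factorial : ℝ) := by
      have hT : K ^ ((2 * α - 1) * (2 * (l : ℝ))) = t ^ (2 * l) := by
        rw [htdef, ← Real.rpow_natCast (K ^ (2 * α - 1)) (2 * l), ← Real.rpow_mul hK0.le]
        congr 1
        push_cast; ring
      rw [hT, div_le_div_iff₀ (by positivity) (by positivity)]
      have hc : ((2 * l).factorial : ℝ) ≤ 4 ^ l * (l.factorial : ℝ) ^ 2 := by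
        exact_mod_cast aux_central l
      calc t ^ (2 * l) * ((2 * l).factorial : ℝ)
          ≤ t ^ (2 * l) * (4 ^ l * (l.factorial : ℝ) ^ 2) :=
            mul_le_mul_of_nonneg_left hc (by positivity)
        _ = (2 * t) ^ (2 * l) * (l.factorial : ℝ) ^ 2 := by
            rw [mul_pow, show ((2 : ℝ)) ^ (2 * l) = 4 ^ l from by rw [pow_mul]; norm_num]
            ring
    calc (x ^ (k - 1 + 2 * l) / ((l.factorial : ℝ) * Real.Gamma (K + l))) ^ 2
        ≤ |x| ^ 4 * (K ^ (α * (2 * (K - 3) + 4 * (l : ℝ))) * Real.exp (-(2 * K))) /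
          ((l.factorial : ℝ) ^ 2 * (K ^ (2 * (K - 1 + (l : ℝ))) * Real.exp (2 * (1 - K)))) :=
          hmid
      _ = |x| ^ 4 * (Real.exp (-2) * K ^ P *
            (K ^ ((2 * α - 1) * (2 * (l : ℝ))) / (l.factorial : ℝ) ^ 2)) := by
          rw [mul_div_assoc, hR]
      _ ≤ |x| ^ 4 * (Real.exp (-2) * K ^ P * ((2 * t) ^ (2 * l) / ((2 * l).factorial : ℝ))) := by
          apply mul_le_mul_of_nonneg_left ?_ (by positivity)
          exact mul_le_mul_of_nonneg_left hstep (by positivity)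
      _ = |x| ^ 4 * (Real.exp (-2) * K ^ P) * ((2 * t) ^ (2 * l) / ((2 * l).factorial : ℝ)) := by
          ring
  -- summability
  have hh : Summable (fun l : ℕ => (2 * t) ^ (2 * l) / ((2 * l).factorial : ℝ)) :=
    (Real.summable_pow_div_factorial (2 * t)).comp_injective inj2
  have hg : Summable (fun l : ℕ =>
      |x| ^ 4 * (Real.exp (-2) * K ^ P) * ((2 * t) ^ (2 * l) / ((2 * l).factorial : ℝ))) :=
    hh.mul_left _
  have hf : Summable (fun l : ℕ =>
      (x ^ (k - 1 + 2 * l) / ((l.factorial : ℝ) * Real.Gamma (K + l))) ^ 2) :=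
    Summable.of_nonneg_of_le (fun l => sq_nonneg _) key hg
  -- scalar estimates
  have hexp2_8 : Real.exp 2 ≤ 8 := by
    have h := Real.exp_one_lt_d9
    have h2 : Real.exp 2 = Real.exp 1 * Real.exp 1 := by rw [← Real.exp_add]; norm_num
    nlinarith [Real.exp_pos 1]
  have hexp2_3 : (3 : ℝ) ≤ Real.exp 2 := by
    have := Real.add_one_le_exp (2 : ℝ); linarith
  set u : ℝ := Real.exp 2 / K with hudef
  have hu0 : 0 < u := by positivity
  have hC1 : K ^ (2 - 2 * α) * u ^ t ≤ 896 * Real.exp 2 := by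
    have hKe : K ^ (2 - 2 * α) ≤ K := by
      calc K ^ (2 - 2 * α) ≤ K ^ (1 : ℝ) :=
            Real.rpow_le_rpow_of_exponent_le hK1 (by linarith)
        _ = K := Real.rpow_one K
    have hKe0 : (0 : ℝ) ≤ K ^ (2 - 2 * α) := (Real.rpow_pos_of_pos hK0 _).le
    have hut0 : (0 : ℝ) ≤ u ^ t := (Real.rpow_pos_of_pos hu0 _).le
    rcases le_or_gt 8 K with h8 | h8
    · have hu1 : u ≤ 1 := by rw [hudef, div_le_one hK0]; linarith
      have h1 : u ^ t ≤ u := by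
        calc u ^ t ≤ u ^ (1 : ℝ) := Real.rpow_le_rpow_of_exponent_ge hu0 hu1 ht1
          _ = u := Real.rpow_one u
      have h2 := mul_le_mul hKe h1 hut0 hK0.le
      have hKu : K * u = Real.exp 2 := by rw [hudef]; field_simp
      nlinarith [Real.exp_pos 2]
    · have hu2 : u ≤ 2 := by rw [hudef, div_le_iff₀ hK0]; nlinarith
      have h1 : u ^ t ≤ (2 : ℝ) ^ t := Real.rpow_le_rpow hu0.le hu2 ht0.le
      have h2 : (2 : ℝ) ^ t ≤ (2 : ℝ) ^ (8 : ℝ) :=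
        Real.rpow_le_rpow_of_exponent_le one_le_two (by linarith)
      have h3 : (2 : ℝ) ^ (8 : ℝ) = 256 := by
        rw [show (8 : ℝ) = ((8 : ℕ) : ℝ) by norm_num, Real.rpow_natCast]
        norm_num
      have h4 : u ^ t ≤ 256 := by linarith
      have h5 : K ^ (2 - 2 * α) ≤ 8 := by linarith
      nlinarith
  have hscal : Real.exp (-2) * K ^ P * Real.exp (2 * t) ≤ 896 * K ^ Q := by
    have hPQ : K ^ P = K ^ Q * (K ^ (2 - 2 * α) * K ^ (-t)) := by
      rw [← Real.rpow_add hK0, ← Real.rpow_add hK0]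
      congr 1
      rw [hPdef, hQdef]; ring
    have hut : K ^ (-t) * Real.exp (2 * t) = u ^ t := by
      rw [hudef, Real.div_rpow (Real.exp_pos 2).le hK0.le, ← Real.exp_mul,
        Real.rpow_neg hK0.le, div_eq_mul_inv]
      ring
    have hQ0 : (0 : ℝ) < K ^ Q := Real.rpow_pos_of_pos hK0 _
    calc Real.exp (-2) * K ^ P * Real.exp (2 * t)
        = K ^ Q * (K ^ (2 - 2 * α) * (K ^ (-t) * Real.exp (2 * t))) * Real.exp (-2) := by
          rw [hPQ]; ring
      _ = K ^ Q * (K ^ (2 - 2 * α) * u ^ t) * Real.exp (-2) := by rw [hut]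
      _ ≤ K ^ Q * (896 * Real.exp 2) * Real.exp (-2) := by
          apply mul_le_mul_of_nonneg_right ?_ (Real.exp_pos _).le
          exact mul_le_mul_of_nonneg_left hC1 hQ0.le
      _ = 896 * K ^ Q * (Real.exp 2 * Real.exp (-2)) := by ring
      _ = 896 * K ^ Q := by rw [← Real.exp_add]; norm_num
  have hx4 : |x| ^ 4 = x ^ 4 := by
    rw [← abs_pow, abs_of_nonneg (by positivity)]
  -- final chain
  calc ∑' l : ℕ, (x ^ (k - 1 + 2 * l) / ((l.factorial : ℝ) * Real.Gamma (K + l))) ^ 2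
      ≤ ∑' l : ℕ, |x| ^ 4 * (Real.exp (-2) * K ^ P) *
          ((2 * t) ^ (2 * l) / ((2 * l).factorial : ℝ)) := Summable.tsum_le_tsum key hf hg
    _ = |x| ^ 4 * (Real.exp (-2) * K ^ P) *
          ∑' l : ℕ, (2 * t) ^ (2 * l) / ((2 * l).factorial : ℝ) := tsum_mul_left
    _ ≤ |x| ^ 4 * (Real.exp (-2) * K ^ P) * Real.exp (2 * t) := by
        apply mul_le_mul_of_nonneg_left (even_part_le_exp (2 * t) (by positivity))
          (by positivity)
    _ = x ^ 4 * (Real.exp (-2) * K ^ P * Real.exp (2 * t)) := by rw [← hx4]; ring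
    _ ≤ x ^ 4 * (896 * K ^ Q) := by
        apply mul_le_mul_of_nonneg_left hscal (by positivity)
    _ = 896 * x ^ 4 * K ^ Q := by ring
end
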